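/- Let 𝒞(x) = (x+1)·ln(x+1) − x and let a ≥ 0. Then the function x ↦ x·𝒞(a/x) is decreasing (antitone) on (0, ∞), and the function x ↦ 𝒞(a·x)/x² is decreasing (antitone) on (0, ∞). -/

import Mathlib

open Real

noncomputable section

/-- The Bennett function `𝒞(x) = (x+1)·ln(x+1) − x`. -/
def bennett (x : ℝ) : ℝ := (x + 1) * Real.log (x + 1) - x

/-! Both maps are differentiated explicitly. With `u = a / x` the derivative of
`x ↦ x 𝒞(a/x)` is `log (1 + u) - u ≤ 0`; with `t = a x` the derivative of `x ↦ 𝒞(a x)/x²` is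
`(2 t - (t + 2) log (1 + t)) / x³`, which is `≤ 0` by the classical bound
`2 t / (t + 2) ≤ log (1 + t)` for `t ≥ 0`. -/

lemma antitoneOn_of_hasDerivAt_nonpos {D : Set ℝ} (hD : Convex ℝ D) {f f' : ℝ → ℝ}
    (hf : ∀ x ∈ D, HasDerivAt f (f' x) x) (hf' : ∀ x ∈ D, f' x ≤ 0) : AntitoneOn f D :=
  antitoneOn_of_hasDerivWithinAt_nonpos hD
    (fun x hx ↦ (hf x hx).continuousAt.continuousWithinAt)
    (fun x hx ↦ (hf x (interior_subset hx)).hasDerivWithinAt)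
    (fun x hx ↦ hf' x (interior_subset hx))

lemma hasDerivAt_bennett {t : ℝ} (ht : -1 < t) :
    HasDerivAt bennett (log (t + 1)) t := by
  have ht1 : t + 1 ≠ 0 := by linarith
  refine ((((hasDerivAt_id' t).add_const 1).fun_mul
    (((hasDerivAt_id' t).add_const 1).log ht1)).fun_sub (hasDerivAt_id' t)).congr_deriv ?_
  field_simp
  ring

lemma hasDerivAt_mul_bennett_div {a x : ℝ} (hx : x ≠ 0) (h : -1 < a / x) :
    HasDerivAt (fun x ↦ x * bennett (a / x)) (log (a / x + 1) - a / x) x := by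
  have hdiv : HasDerivAt (fun y ↦ a / y) (-(a / x ^ 2)) x := by
    simpa [div_eq_mul_inv] using (hasDerivAt_inv hx).const_mul a
  refine ((hasDerivAt_id' x).fun_mul ((hasDerivAt_bennett h).comp x hdiv)).congr_deriv ?_
  simp only [bennett, Function.comp_apply]
  field_simp
  ring

lemma hasDerivAt_bennett_mul_div_sq {a x : ℝ} (hx : x ≠ 0) (h : -1 < a * x) :
    HasDerivAt (fun x ↦ bennett (a * x) / x ^ 2)
      ((2 * (a * x) - (a * x + 2) * log (a * x + 1)) / x ^ 3) x := by
  refine (((hasDerivAt_bennett h).comp x ((hasDerivAt_id' x).const_mul a)).fun_div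
    (hasDerivAt_pow 2 x) (pow_ne_zero 2 hx)).congr_deriv ?_
  simp only [bennett, Function.comp_apply]
  field_simp
  ring

lemma antitoneOn_mul_bennett_div {a : ℝ} (ha : 0 ≤ a) :
    AntitoneOn (fun x ↦ x * bennett (a / x)) (Set.Ioi 0) := by
  have hu {x : ℝ} (hx : x ∈ Set.Ioi 0) : 0 ≤ a / x := div_nonneg ha (le_of_lt hx)
  refine antitoneOn_of_hasDerivAt_nonpos (convex_Ioi 0)
    (fun x hx ↦ hasDerivAt_mul_bennett_div (ne_of_gt hx) (by linarith [hu hx])) fun x hx ↦ ?_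
  have := log_le_sub_one_of_pos (x := a / x + 1) (by linarith [hu hx])
  linarith

lemma antitoneOn_bennett_mul_div_sq {a : ℝ} (ha : 0 ≤ a) :
    AntitoneOn (fun x ↦ bennett (a * x) / x ^ 2) (Set.Ioi 0) := by
  have ht {x : ℝ} (hx : x ∈ Set.Ioi 0) : 0 ≤ a * x := mul_nonneg ha (le_of_lt hx)
  refine antitoneOn_of_hasDerivAt_nonpos (convex_Ioi 0)
    (fun x hx ↦ hasDerivAt_bennett_mul_div_sq (ne_of_gt hx) (by linarith [ht hx]))
    fun x hx ↦ div_nonpos_of_nonpos_of_nonneg ?_ (pow_pos hx 3).le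
  have hlog := le_log_one_add_of_nonneg (ht hx)
  rw [div_le_iff₀ (by linarith [ht hx]), add_comm 1] at hlog
  linarith

/-- For `a ≥ 0`, the functions `x ↦ x·𝒞(a/x)` and `x ↦ 𝒞(a·x)/x²`
are both antitone on `(0, ∞)`. -/
theorem bennett_monotonicity (a : ℝ) (ha : 0 ≤ a) :
    AntitoneOn (fun x : ℝ => x * bennett (a / x)) (Set.Ioi 0) ∧
    AntitoneOn (fun x : ℝ => bennett (a * x) / x ^ 2) (Set.Ioi 0) :=
  ⟨antitoneOn_mul_bennett_div ha, antitoneOn_bennett_mul_div_sq ha⟩
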